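/- Let ν ∈ (0,1), μ = 1 − ν, δ ∈ ℝ, α > 0, and let (C_N) be a sequence of integers with C_N = νN + δ√N + o(√N). Then lim_{N→∞} ∫₀^{√N} (1 − u/√N)^{N−C_N} · (1 + (μ/ν)·u/√N)^{C_N} · u^{α−1} du = ∫₀^∞ exp(δu/ν − (1−ν)u²/(2ν)) u^{α−1} du. -/

import Mathlib

/-!
Put `x = u / √N` and `c = μ / ν = 1 / ν - 1`. Expanding `log (1 - x)` and `log (1 + c x)` to second
order, the logarithm of `(1 - x) ^ (N - C) * (1 + c x) ^ C` is
`(C c - (N - C)) / √N * u - (N - C + C c²) / N * u² / 2 + O(u³ / √N)`, and the two coefficients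
tend to `δ / ν` and `(1 - ν) / ν`. For domination, `log (1 - x) ≤ -x - x² / 2` and `log (1 + y) ≤ y`
bound the integrand by `exp (K u - κ u²) u ^ (α - 1)` uniformly in `N`, because
`(N - C) / N → 1 - ν > 0`.
-/

open Filter Topology MeasureTheory Asymptotics Real Set

lemma abs_log_one_sub_add_add_sq_div_two_le {y : ℝ} (hy : |y| ≤ 1 / 2) :
    |log (1 - y) + y + y ^ 2 / 2| ≤ 2 * |y| ^ 3 := by
  have hbound := abs_log_sub_add_sum_range_le (hy.trans_lt (by norm_num)) 2
  norm_num [Finset.sum_range_succ] at hbound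
  calc |log (1 - y) + y + y ^ 2 / 2| ≤ |y| ^ 3 / (1 - |y|) := by
        convert hbound using 2; ring
    _ ≤ 2 * |y| ^ 3 := by
        rw [div_le_iff₀ (by linarith)]
        nlinarith [pow_nonneg (abs_nonneg y) 3]

lemma abs_mul_log_one_sub_add_mul_log_one_add_sub_le {a b c x : ℝ} (ha : 0 ≤ a) (hb : 0 ≤ b)
    (hx : |x| ≤ 1 / 2) (hcx : |c * x| ≤ 1 / 2) :
    |a * log (1 - x) + b * log (1 + c * x) - ((b * c - a) * x - (a + b * c ^ 2) * x ^ 2 / 2)|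
      ≤ 2 * (1 + |c| ^ 3) * (a + b) * |x| ^ 3 := by
  have e₁ := abs_log_one_sub_add_add_sq_div_two_le hx
  have e₂ := abs_log_one_sub_add_add_sq_div_two_le (y := -(c * x)) (by rwa [abs_neg])
  rw [sub_neg_eq_add, abs_neg, abs_mul] at e₂
  have hc : 0 ≤ |c| ^ 3 := by positivity
  have hx3 : 0 ≤ |x| ^ 3 := by positivity
  calc _ = |a * (log (1 - x) + x + x ^ 2 / 2)
          + b * (log (1 + c * x) + -(c * x) + (-(c * x)) ^ 2 / 2)| := by congr 1; ring
    _ ≤ a * (2 * |x| ^ 3) + b * (2 * (|c| * |x|) ^ 3) := by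
        refine (abs_add_le _ _).trans (add_le_add ?_ ?_) <;> rw [abs_mul, abs_of_nonneg ‹_›]
        · exact mul_le_mul_of_nonneg_left e₁ ha
        · exact mul_le_mul_of_nonneg_left e₂ hb
    _ ≤ 2 * (1 + |c| ^ 3) * (a + b) * |x| ^ 3 := by
        rw [mul_pow]; nlinarith [mul_nonneg ha (mul_nonneg hc hx3), mul_nonneg hb hx3]

lemma tendsto_mul_log_one_sub_add_mul_log_one_add {a b : ℕ → ℕ} {s : ℕ → ℝ} {c u L₁ L₂ : ℝ}
    (hs : Tendsto s atTop atTop)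
    (h₁ : Tendsto (fun N => ((b N : ℝ) * c - a N) / s N) atTop (𝓝 L₁))
    (h₂ : Tendsto (fun N => ((a N : ℝ) + b N * c ^ 2) / s N ^ 2) atTop (𝓝 L₂))
    (h₃ : Tendsto (fun N => ((a N : ℝ) + b N) / s N ^ 3) atTop (𝓝 0)) :
    Tendsto (fun N => (a N : ℝ) * log (1 - u / s N) + b N * log (1 + c * u / s N)) atTop
      (𝓝 (L₁ * u - L₂ * u ^ 2 / 2)) := by
  have hmain : Tendsto (fun N => ((b N : ℝ) * c - a N) / s N * u
      - ((a N : ℝ) + b N * c ^ 2) / s N ^ 2 * u ^ 2 / 2) atTop (𝓝 (L₁ * u - L₂ * u ^ 2 / 2)) :=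
    (h₁.mul_const u).sub ((h₂.mul_const _).div_const 2)
  have hrem : Tendsto (fun N => 2 * (1 + |c| ^ 3) * |u| ^ 3 * (((a N : ℝ) + b N) / s N ^ 3))
      atTop (𝓝 0) := by simpa using h₃.const_mul (2 * (1 + |c| ^ 3) * |u| ^ 3)
  have herr : Tendsto (fun N => ((a N : ℝ) * log (1 - u / s N) + b N * log (1 + c * u / s N))
      - (((b N : ℝ) * c - a N) / s N * u - ((a N : ℝ) + b N * c ^ 2) / s N ^ 2 * u ^ 2 / 2))
      atTop (𝓝 0) := by
    refine squeeze_zero_norm' ?_ hrem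
    filter_upwards [hs.eventually_ge_atTop 1, hs.eventually_ge_atTop (2 * |u|),
      hs.eventually_ge_atTop (2 * |c * u|)] with N hs₁ hsu hscu
    have hs₀ : 0 < s N := by linarith
    have hx : |u / s N| ≤ 1 / 2 := by
      rw [abs_div, abs_of_pos hs₀, div_le_iff₀ hs₀]; linarith
    have hcx : |c * (u / s N)| ≤ 1 / 2 := by
      rw [← mul_div_assoc, abs_div, abs_of_pos hs₀, div_le_iff₀ hs₀]; linarith
    have := abs_mul_log_one_sub_add_mul_log_one_add_sub_le (Nat.cast_nonneg (a N))
      (Nat.cast_nonneg (b N)) hx hcx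
    rw [← mul_div_assoc, abs_div, abs_of_pos hs₀] at this
    refine (le_of_eq ?_).trans (this.trans_eq ?_)
    · rw [Real.norm_eq_abs]; congr 1; ring
    · ring
  simpa using herr.add hmain

lemma tendsto_one_sub_div_pow_mul_one_add_div_pow {a b : ℕ → ℕ} {s : ℕ → ℝ} {c u L₁ L₂ : ℝ}
    (hs : Tendsto s atTop atTop)
    (h₁ : Tendsto (fun N => ((b N : ℝ) * c - a N) / s N) atTop (𝓝 L₁))
    (h₂ : Tendsto (fun N => ((a N : ℝ) + b N * c ^ 2) / s N ^ 2) atTop (𝓝 L₂))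
    (h₃ : Tendsto (fun N => ((a N : ℝ) + b N) / s N ^ 3) atTop (𝓝 0)) :
    Tendsto (fun N => (1 - u / s N) ^ a N * (1 + c * u / s N) ^ b N) atTop
      (𝓝 (exp (L₁ * u - L₂ * u ^ 2 / 2))) := by
  refine ((continuous_exp.tendsto _).comp
    (tendsto_mul_log_one_sub_add_mul_log_one_add hs h₁ h₂ h₃)).congr' ?_
  filter_upwards [hs.eventually_gt_atTop |u|, hs.eventually_gt_atTop |c * u|]
    with N hsu hscu
  have hs₀ : 0 < s N := (abs_nonneg u).trans_lt hsu
  have h₁ : 0 < 1 - u / s N := by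
    have := (div_lt_one hs₀).2 ((le_abs_self u).trans_lt hsu); linarith
  have h₂ : 0 < 1 + c * u / s N := by
    have := (div_lt_one hs₀).2 ((neg_le_abs (c * u)).trans_lt hscu)
    rw [neg_div] at this
    linarith
  simp only [Function.comp_apply, exp_add, exp_nat_mul, exp_log h₁, exp_log h₂]

lemma log_one_sub_le_neg_sub_sq_div_two {x : ℝ} (hx₀ : 0 ≤ x) (hx₁ : x < 1) :
    log (1 - x) ≤ -x - x ^ 2 / 2 := by
  have hsum := hasSum_pow_div_log_of_abs_lt_one (abs_lt.2 ⟨by linarith, hx₁⟩)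
  have := sum_le_hasSum (Finset.range 2) (fun i _ => by positivity) hsum
  norm_num [Finset.sum_range_succ] at this
  linarith

lemma one_sub_pow_mul_one_add_pow_le {x c : ℝ} (hx₀ : 0 ≤ x) (hx₁ : x < 1) (hc : 0 ≤ c)
    (a b : ℕ) : (1 - x) ^ a * (1 + c * x) ^ b ≤ exp ((b * c - a) * x - a * x ^ 2 / 2) := by
  have h₁ : 1 - x ≤ exp (-x - x ^ 2 / 2) :=
    (exp_log (by linarith)).symm.le.trans
      (exp_le_exp.2 (log_one_sub_le_neg_sub_sq_div_two hx₀ hx₁))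
  have h₂ : 1 + c * x ≤ exp (c * x) := by linarith [add_one_le_exp (c * x)]
  calc (1 - x) ^ a * (1 + c * x) ^ b ≤ exp (-x - x ^ 2 / 2) ^ a * exp (c * x) ^ b :=
        mul_le_mul (pow_le_pow_left₀ (by linarith) h₁ a)
          (pow_le_pow_left₀ (by positivity) h₂ b) (by positivity) (by positivity)
    _ = exp ((b * c - a) * x - a * x ^ 2 / 2) := by
        rw [← exp_nat_mul, ← exp_nat_mul, ← exp_add]; congr 1; ring

lemma one_sub_div_pow_mul_one_add_div_pow_le_exp {a b : ℕ} {s c u K κ : ℝ} (hc : 0 ≤ c)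
    (hu : 0 < u) (hus : u < s) (hK : ((b : ℝ) * c - a) / s ≤ K) (hκ : κ ≤ a / s ^ 2) :
    (1 - u / s) ^ a * (1 + c * u / s) ^ b ≤ exp (K * u - κ / 2 * u ^ 2) := by
  have hs : 0 < s := hu.trans hus
  rw [mul_div_assoc]
  refine (one_sub_pow_mul_one_add_pow_le (div_pos hu hs).le ((div_lt_one hs).2 hus) hc a b).trans
    (exp_le_exp.2 ?_)
  have hlin := mul_le_mul_of_nonneg_right hK hu.le
  have hquad := mul_le_mul_of_nonneg_right hκ (sq_nonneg u)
  calc ((b : ℝ) * c - a) * (u / s) - a * (u / s) ^ 2 / 2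
      = ((b : ℝ) * c - a) / s * u - a / s ^ 2 * u ^ 2 / 2 := by ring
    _ ≤ K * u - κ / 2 * u ^ 2 := by linarith

lemma integrableOn_exp_mul_sub_mul_sq_mul_rpow {K κ p : ℝ} (hκ : 0 < κ) (hp : -1 < p) :
    IntegrableOn (fun u => exp (K * u - κ * u ^ 2) * u ^ p) (Ioi 0) := by
  refine ((integrableOn_rpow_mul_exp_neg_mul_sq (half_pos hκ) hp).const_mul
    (exp (K ^ 2 / (2 * κ)))).mono' (by fun_prop) ?_
  refine (ae_restrict_iff' measurableSet_Ioi).2 (Eventually.of_forall fun u (hu : 0 < u) => ?_)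
  have hexp : K * u - κ * u ^ 2 ≤ K ^ 2 / (2 * κ) + -(κ / 2) * u ^ 2 := by
    have hsq : K ^ 2 / (2 * κ) + -(κ / 2) * u ^ 2 - (K * u - κ * u ^ 2)
        = (κ * u - K) ^ 2 / (2 * κ) := by
      field_simp; ring
    rw [← sub_nonneg, hsq]
    positivity
  rw [Real.norm_of_nonneg (by positivity), mul_comm (u ^ p), ← mul_assoc, ← exp_add]
  exact mul_le_mul_of_nonneg_right (exp_le_exp.2 hexp) (rpow_nonneg hu.le p)

theorem tendsto_setIntegral_one_sub_div_pow_mul_one_add_div_pow_mul_rpow {a b : ℕ → ℕ}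
    {s : ℕ → ℝ} {c α L₁ L₂ κ : ℝ} (hc : 0 ≤ c) (hα : 0 < α) (hκ : 0 < κ)
    (hs : Tendsto s atTop atTop)
    (h₁ : Tendsto (fun N => ((b N : ℝ) * c - a N) / s N) atTop (𝓝 L₁))
    (h₂ : Tendsto (fun N => ((a N : ℝ) + b N * c ^ 2) / s N ^ 2) atTop (𝓝 L₂))
    (h₃ : Tendsto (fun N => ((a N : ℝ) + b N) / s N ^ 3) atTop (𝓝 0))
    (ha : ∀ᶠ N in atTop, κ ≤ a N / s N ^ 2) :
    Tendsto (fun N => ∫ u in Ioo 0 (s N),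
        (1 - u / s N) ^ a N * (1 + c * u / s N) ^ b N * u ^ (α - 1))
      atTop (𝓝 (∫ u in Ioi 0, exp (L₁ * u - L₂ * u ^ 2 / 2) * u ^ (α - 1))) := by
  set F : ℕ → ℝ → ℝ := fun N => (Ioo 0 (s N)).indicator
    fun u => (1 - u / s N) ^ a N * (1 + c * u / s N) ^ b N * u ^ (α - 1)
  have hF : ∀ N, ∫ u in Ioo 0 (s N), (1 - u / s N) ^ a N * (1 + c * u / s N) ^ b N * u ^ (α - 1)
      = ∫ u in Ioi 0, F N u := fun N => by
    rw [setIntegral_indicator measurableSet_Ioo, inter_eq_self_of_subset_right Ioo_subset_Ioi_self]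
  simp only [hF]
  refine tendsto_integral_filter_of_dominated_convergence
    (fun u => exp ((L₁ + 1) * u - κ / 2 * u ^ 2) * u ^ (α - 1))
    (Eventually.of_forall fun N =>
      ((Measurable.indicator (by fun_prop) measurableSet_Ioo).aestronglyMeasurable))
    ?_ (integrableOn_exp_mul_sub_mul_sq_mul_rpow (half_pos hκ) (by linarith)) ?_
  · filter_upwards [h₁.eventually_le_const (lt_add_one L₁), ha] with N hK hκN
    refine (ae_restrict_iff' measurableSet_Ioi).2 (Eventually.of_forall fun u (hu : 0 < u) => ?_)
    dsimp only [F]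
    by_cases hus : u < s N
    · have hs₀ : 0 < s N := hu.trans hus
      have hbase : 0 ≤ 1 - u / s N := by linarith [(div_lt_one hs₀).2 hus]
      rw [indicator_of_mem (show u ∈ Ioo 0 (s N) from ⟨hu, hus⟩),
        Real.norm_of_nonneg (by positivity)]
      exact mul_le_mul_of_nonneg_right
        (one_sub_div_pow_mul_one_add_div_pow_le_exp hc hu hus hK hκN) (rpow_nonneg hu.le _)
    · rw [indicator_of_notMem (fun h => hus h.2), norm_zero]
      positivity
  · refine (ae_restrict_iff' measurableSet_Ioi).2 (Eventually.of_forall fun u (hu : 0 < u) => ?_)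
    refine ((tendsto_one_sub_div_pow_mul_one_add_div_pow hs h₁ h₂ h₃).mul_const _).congr' ?_
    filter_upwards [hs.eventually_gt_atTop u] with N hus
    dsimp only [F]
    rw [indicator_of_mem (show u ∈ Ioo 0 (s N) from ⟨hu, hus⟩)]

lemma tendsto_sub_mul_div_sqrt_of_isLittleO {x : ℕ → ℝ} {ν δ : ℝ}
    (h : (fun N : ℕ => x N - ν * N - δ * √N) =o[atTop] fun N : ℕ => √N) :
    Tendsto (fun N : ℕ => (x N - ν * N) / √N) atTop (𝓝 δ) := by
  refine (h.tendsto_div_nhds_zero.add_const δ).congr' ?_ |>.trans_eq (by rw [zero_add])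
  filter_upwards [eventually_gt_atTop 0] with N hN
  have : √(N : ℝ) ≠ 0 := (sqrt_pos.2 (Nat.cast_pos.2 hN)).ne'
  field_simp
  ring

lemma tendsto_div_of_tendsto_sub_mul_div_sqrt {x : ℕ → ℝ} {ν δ : ℝ}
    (h : Tendsto (fun N : ℕ => (x N - ν * N) / √N) atTop (𝓝 δ)) :
    Tendsto (fun N : ℕ => x N / N) atTop (𝓝 ν) := by
  have hs : Tendsto (fun N : ℕ => √(N : ℝ)) atTop atTop :=
    tendsto_sqrt_atTop.comp tendsto_natCast_atTop_atTop
  refine ((h.div_atTop hs).add_const ν).congr' ?_ |>.trans_eq (by rw [zero_add])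
  filter_upwards [eventually_gt_atTop 0] with N hN
  have hN : (0 : ℝ) < N := Nat.cast_pos.2 hN
  rw [div_div, ← sq, sq_sqrt hN.le]
  field_simp
  ring

theorem tendsto_setIntegral_of_tendsto_sub_mul_div_sqrt {C : ℕ → ℕ} {ν δ α : ℝ} (hν₀ : 0 < ν)
    (hν₁ : ν < 1) (hα : 0 < α) (hq : Tendsto (fun N : ℕ => ((C N : ℝ) - ν * N) / √N) atTop (𝓝 δ)) :
    Tendsto (fun N : ℕ => ∫ u in Ioo 0 √N,
        (1 - u / √N) ^ (N - C N) * (1 + (1 - ν) / ν * u / √N) ^ C N * u ^ (α - 1))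
      atTop (𝓝 (∫ u in Ioi 0, exp (δ / ν * u - (1 - ν) / ν * u ^ 2 / 2) * u ^ (α - 1))) := by
  have hs : Tendsto (fun N : ℕ => √(N : ℝ)) atTop atTop :=
    tendsto_sqrt_atTop.comp tendsto_natCast_atTop_atTop
  have hr := tendsto_div_of_tendsto_sub_mul_div_sqrt hq
  have hN : ∀ᶠ N : ℕ in atTop, 0 < (N : ℝ) ∧ ((N - C N : ℕ) : ℝ) = N - C N := by
    filter_upwards [hr.eventually_lt_const hν₁, eventually_gt_atTop 0] with N hCN hN
    have hN : (0 : ℝ) < N := Nat.cast_pos.2 hN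
    exact ⟨hN, Nat.cast_sub (by exact_mod_cast ((div_lt_one hN).1 hCN).le)⟩
  have h₁ : Tendsto (fun N : ℕ => ((C N : ℝ) * ((1 - ν) / ν) - (N - C N : ℕ)) / √N) atTop
      (𝓝 (δ / ν)) := (hq.div_const ν).congr' <| by
    filter_upwards [hN] with N ⟨hN, hcast⟩
    rw [hcast]; field_simp; ring
  have h₂ : Tendsto (fun N : ℕ => (((N - C N : ℕ) : ℝ) + C N * ((1 - ν) / ν) ^ 2) / √N ^ 2)
      atTop (𝓝 ((1 - ν) / ν)) := by
    have hlim : Tendsto (fun N : ℕ => 1 - C N / (N : ℝ) + ((1 - ν) / ν) ^ 2 * (C N / N)) atTop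
        (𝓝 ((1 - ν) / ν)) := by
      convert (tendsto_const_nhds.sub hr).add (hr.const_mul (((1 - ν) / ν) ^ 2)) using 2
      field_simp; ring
    refine hlim.congr' ?_
    filter_upwards [hN] with N ⟨hN, hcast⟩
    rw [hcast, sq_sqrt hN.le]; field_simp
  have h₃ : Tendsto (fun N : ℕ => (((N - C N : ℕ) : ℝ) + C N) / √N ^ 3) atTop (𝓝 0) := by
    refine (tendsto_inv_atTop_zero.comp hs).congr' ?_
    filter_upwards [hN] with N ⟨hN, hcast⟩
    rw [hcast, sub_add_cancel, pow_succ, sq_sqrt hN.le, Function.comp_apply]; field_simp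
  have ha : ∀ᶠ N : ℕ in atTop, (1 - ν) / 2 ≤ ((N - C N : ℕ) : ℝ) / √N ^ 2 := by
    filter_upwards [hN, hr.eventually_le_const (show ν < (1 + ν) / 2 by linarith)]
      with N ⟨hN, hcast⟩ hCN
    have : ((N : ℝ) - C N) / N = 1 - C N / N := by field_simp
    rw [hcast, sq_sqrt hN.le, this]; linarith
  exact tendsto_setIntegral_one_sub_div_pow_mul_one_add_div_pow_mul_rpow
    (div_nonneg (by linarith) hν₀.le) hα (by linarith) hs h₁ h₂ h₃ ha

/-- Critical regime: convergence of the denominator integral after the substitution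
`u → u/√N` to the Gaussian-type integral. -/
theorem critical_denominator_convergence
    (ν μ δ α : ℝ) (hν : ν ∈ Set.Ioo (0:ℝ) 1) (hμ : μ = 1 - ν) (hα : 0 < α)
    (C : ℕ → ℕ)
    (hC : (fun N : ℕ => (C N : ℝ) - ν * N - δ * Real.sqrt N)
        =o[atTop] fun N : ℕ => Real.sqrt N) :
    Tendsto (fun N : ℕ =>
        ∫ u in Set.Ioo (0:ℝ) (Real.sqrt N),
          (1 - u / Real.sqrt N) ^ (N - C N) *
            (1 + (μ / ν) * u / Real.sqrt N) ^ (C N) * u ^ (α - 1))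
      atTop
      (𝓝 (∫ u in Set.Ioi (0:ℝ),
        Real.exp (δ * u / ν - (1 - ν) * u ^ 2 / (2 * ν)) * u ^ (α - 1))) := by
  subst hμ
  convert tendsto_setIntegral_of_tendsto_sub_mul_div_sqrt hν.1 hν.2 hα
    (tendsto_sub_mul_div_sqrt_of_isLittleO hC) using 4 with u
  congr 2
  ring
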